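/- arXiv:1908.03263 — 2 statements merged into one kernel-verified Lean document; each statement's English description precedes it below -/
import Mathlib

section
/- Let (Ω₁, μ), (Ω₂, ν), (Ω₃, ρ) be probability spaces, let f : Ω₁ × Ω₂ × Ω₃ → ℝ be square-integrable with respect to μ × ν × ρ, and let g : Ω₁ × Ω₂ → ℝ be square-integrable with respect to μ × ν. Define the difference estimator F(x,y,z) = f(x,y,z) − g(x,y) + ∫ g(x,y') dν(y'). Then: (i) ∫ F d(μ×ν×ρ) = ∫ f d(μ×ν×ρ); and (ii) Var_{μ×ν×ρ}[F] = Var_{x∼μ}[∫∫ f(x,y,z) dν(y) dρ(z)] + ∫ Var_{y∼ν}[∫ f(x,y,z) dρ(z) − g(x,y)] dμ(x) + ∫∫ Var_{z∼ρ}[f(x,y,z)] dμ(x) dν(y). In particular, compared with the corresponding decomposition of Var[f], only the middle component is changed by the control variate g, while the first and third components are unaffected. -/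
/-!
Applying the law of total variance on a product measure twice splits `Var F` into a term
for each coordinate. The correction `-g(x, y) + ∫ g(x, y') dν(y')` has zero `ν`-mean for
every `x` and does not depend on `z`. Hence it leaves the means `∫∫ F(x, ·, ·) = ∫∫ f(x, ·, ·)`
unchanged, which gives unbiasedness and the first term; it shifts every `z`-section of `F`
by a constant, which leaves the third term; and in the middle term it survives as `-g`, up to
a shift by a constant.
-/

open MeasureTheory ProbabilityTheory

namespace MeasureTheory

variable {α β γ : Type*} [MeasurableSpace α] [MeasurableSpace β] [MeasurableSpace γ]
  {μ : Measure α} {ν : Measure β} {ρ : Measure γ}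

lemma MemLp.prodMk_left {E : Type*} [NormedAddCommGroup E] [SFinite μ] [SFinite ν]
    {p : ENNReal} {h : α × β → E} (hh : MemLp h p (μ.prod ν)) (hp0 : p ≠ 0) (hp : p ≠ ⊤) :
    ∀ᵐ x ∂μ, MemLp (fun y => h (x, y)) p ν := by
  filter_upwards [hh.1.prodMk_left, (hh.integrable_norm_rpow hp0 hp).prod_right_ae]
    with x hx hint
  exact (integrable_norm_rpow_iff hx hp0 hp).1 hint

lemma MemLp.integral_prod_left [SFinite μ] [IsProbabilityMeasure ν] {h : α × β → ℝ}
    (hh : MemLp h 2 (μ.prod ν)) : MemLp (fun x => ∫ y, h (x, y) ∂ν) 2 μ := by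
  have hm : AEStronglyMeasurable (fun x => ∫ y, h (x, y) ∂ν) μ := hh.1.integral_prod_right'
  refine (memLp_two_iff_integrable_sq hm).2 <|
    hh.integrable_sq.integral_prod_left.mono' (hm.pow 2) ?_
  filter_upwards [hh.prodMk_left two_ne_zero ENNReal.ofNat_ne_top] with x hx
  -- Jensen's inequality `(∫ h)² ≤ ∫ h²`, in the form `0 ≤ Var`.
  have hvar := variance_nonneg (fun y => h (x, y)) ν
  rw [variance_eq_sub hx] at hvar
  rw [Real.norm_of_nonneg (sq_nonneg _)]
  simpa [Pi.pow_apply] using hvar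

end MeasureTheory

namespace ProbabilityTheory

variable {α β γ : Type*} [MeasurableSpace α] [MeasurableSpace β] [MeasurableSpace γ]
  {μ : Measure α} {ν : Measure β} {ρ : Measure γ}

lemma integrable_variance_prodMk_left [SFinite μ] [IsProbabilityMeasure ν] {h : α × β → ℝ}
    (hh : MemLp h 2 (μ.prod ν)) : Integrable (fun x => Var[fun y => h (x, y); ν]) μ := by
  refine (hh.integrable_sq.integral_prod_left.sub hh.integral_prod_left.integrable_sq).congr ?_
  filter_upwards [hh.prodMk_left two_ne_zero ENNReal.ofNat_ne_top] with x hx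
  simp [variance_eq_sub hx]

theorem variance_prod [IsProbabilityMeasure μ] [IsProbabilityMeasure ν] {h : α × β → ℝ}
    (hh : MemLp h 2 (μ.prod ν)) :
    Var[h; μ.prod ν] = Var[fun x => ∫ y, h (x, y) ∂ν; μ] + ∫ x, Var[fun y => h (x, y); ν] ∂μ := by
  have hsq : ∫ x, Var[fun y => h (x, y); ν] ∂μ
      = ∫ p, h p ^ 2 ∂(μ.prod ν) - ∫ x, (∫ y, h (x, y) ∂ν) ^ 2 ∂μ := by
    rw [integral_prod _ hh.integrable_sq,
      ← integral_sub hh.integrable_sq.integral_prod_left hh.integral_prod_left.integrable_sq]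
    refine integral_congr_ae ?_
    filter_upwards [hh.prodMk_left two_ne_zero ENNReal.ofNat_ne_top] with x hx
    simp [variance_eq_sub hx]
  rw [variance_eq_sub hh, variance_eq_sub hh.integral_prod_left, hsq,
    integral_prod _ (hh.integrable one_le_two)]
  simp only [Pi.pow_apply]
  ring

lemma integral_prod_prod [SFinite μ] [SFinite ν] [SFinite ρ] {h : α × β × γ → ℝ}
    (hh : Integrable h (μ.prod (ν.prod ρ))) :
    ∫ p, h p ∂(μ.prod (ν.prod ρ)) = ∫ x, ∫ y, ∫ z, h (x, y, z) ∂ρ ∂ν ∂μ := by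
  rw [integral_prod _ hh]
  refine integral_congr_ae ?_
  filter_upwards [hh.prod_right_ae] with x hx
  exact integral_prod _ hx

theorem variance_prod_prod [IsProbabilityMeasure μ] [IsProbabilityMeasure ν]
    [IsProbabilityMeasure ρ] {h : α × β × γ → ℝ} (hh : MemLp h 2 (μ.prod (ν.prod ρ))) :
    Var[h; μ.prod (ν.prod ρ)]
      = Var[fun x => ∫ y, ∫ z, h (x, y, z) ∂ρ ∂ν; μ]
        + ∫ x, Var[fun y => ∫ z, h (x, y, z) ∂ρ; ν] ∂μ
        + ∫ x, ∫ y, Var[fun z => h (x, y, z); ρ] ∂ν ∂μ := by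
  have hh' : MemLp (fun q : (α × β) × γ => h (q.1.1, q.1.2, q.2)) 2 ((μ.prod ν).prod ρ) :=
    hh.comp_measurePreserving (measurePreserving_prodAssoc μ ν ρ)
  have hsec := hh.prodMk_left two_ne_zero ENNReal.ofNat_ne_top
  have hmean : (fun x => ∫ w, h (x, w) ∂(ν.prod ρ)) =ᵐ[μ]
      fun x => ∫ y, ∫ z, h (x, y, z) ∂ρ ∂ν := by
    filter_upwards [hsec] with x hx
    exact integral_prod _ (hx.integrable one_le_two)
  have hvar : (fun x => Var[fun w => h (x, w); ν.prod ρ]) =ᵐ[μ]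
      fun x => Var[fun y => ∫ z, h (x, y, z) ∂ρ; ν] + ∫ y, Var[fun z => h (x, y, z); ρ] ∂ν := by
    filter_upwards [hsec] with x hx
    exact variance_prod hx
  rw [variance_prod hh, variance_congr hmean, integral_congr_ae hvar,
    integral_add (integrable_variance_prodMk_left hh'.integral_prod_left)
      (integrable_variance_prodMk_left hh').integral_prod_left, add_assoc]

section ControlVariate

variable [IsProbabilityMeasure ρ] {u : β × γ → ℝ} {v : β → ℝ}

lemma ae_integral_sub_add_const [SFinite ν] (hu : Integrable u (ν.prod ρ)) (c : ℝ) :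
    ∀ᵐ y ∂ν, ∫ z, (u (y, z) - v y + c) ∂ρ = ∫ z, u (y, z) ∂ρ - v y + c := by
  filter_upwards [hu.prod_right_ae] with y hy
  rw [integral_add (f := fun z => u (y, z) - v y) (hy.sub (integrable_const _))
    (integrable_const _), integral_sub hy (integrable_const _)]
  simp

lemma integral_integral_sub_add_const [IsProbabilityMeasure ν] (hu : Integrable u (ν.prod ρ))
    (hv : Integrable v ν) (c : ℝ) :
    ∫ y, ∫ z, (u (y, z) - v y + c) ∂ρ ∂ν = ∫ y, ∫ z, u (y, z) ∂ρ ∂ν - ∫ y, v y ∂ν + c := by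
  rw [integral_congr_ae (ae_integral_sub_add_const hu c),
    integral_add (f := fun y => ∫ z, u (y, z) ∂ρ - v y) (hu.integral_prod_left.sub hv)
      (integrable_const _),
    integral_sub hu.integral_prod_left hv]
  simp

lemma variance_integral_sub_add_const [IsProbabilityMeasure ν] (hu : MemLp u 2 (ν.prod ρ))
    (hv : MemLp v 2 ν) (c : ℝ) :
    Var[fun y => ∫ z, (u (y, z) - v y + c) ∂ρ; ν] = Var[fun y => ∫ z, u (y, z) ∂ρ - v y; ν] := by
  rw [variance_congr (ae_integral_sub_add_const (hu.integrable one_le_two) c)]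
  exact variance_add_const (hu.integral_prod_left.sub hv).1 c

lemma ae_variance_sub_add_const [SFinite ν] (hu : AEStronglyMeasurable u (ν.prod ρ)) (c : ℝ) :
    ∀ᵐ y ∂ν, Var[fun z => u (y, z) - v y + c; ρ] = Var[fun z => u (y, z); ρ] := by
  filter_upwards [hu.prodMk_left] with y hy
  simp_rw [sub_add_eq_add_sub, add_sub_assoc]
  exact variance_add_const hy (c - v y)

end ControlVariate

end ProbabilityTheory

theorem difference_estimator_unbiased_and_variance_decomposition
    {Ω₁ Ω₂ Ω₃ : Type*} [MeasurableSpace Ω₁] [MeasurableSpace Ω₂] [MeasurableSpace Ω₃]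
    (μ : Measure Ω₁) (ν : Measure Ω₂) (ρ : Measure Ω₃)
    [IsProbabilityMeasure μ] [IsProbabilityMeasure ν] [IsProbabilityMeasure ρ]
    (f : Ω₁ × Ω₂ × Ω₃ → ℝ) (hf : MemLp f 2 (μ.prod (ν.prod ρ)))
    (g : Ω₁ × Ω₂ → ℝ) (hg : MemLp g 2 (μ.prod ν))
    (F : Ω₁ × Ω₂ × Ω₃ → ℝ)
    (hF : ∀ x y z, F (x, y, z) = f (x, y, z) - g (x, y) + ∫ y', g (x, y') ∂ν) :
    (∫ p, F p ∂(μ.prod (ν.prod ρ))) = (∫ p, f p ∂(μ.prod (ν.prod ρ)))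
      ∧ variance F (μ.prod (ν.prod ρ))
        = variance (fun x => ∫ y, ∫ z, f (x, y, z) ∂ρ ∂ν) μ
          + (∫ x, variance (fun y => (∫ z, f (x, y, z) ∂ρ) - g (x, y)) ν ∂μ)
          + (∫ x, ∫ y, variance (fun z => f (x, y, z)) ρ ∂ν ∂μ) := by
  have hFL : MemLp F 2 (μ.prod (ν.prod ρ)) := by
    rw [show F = fun p => f p - g (p.1, p.2.1) + ∫ y', g (p.1, y') ∂ν from
      funext fun p => hF p.1 p.2.1 p.2.2]
    exact (hf.sub (hg.comp_measurePreserving ((MeasurePreserving.id μ).prod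
      measurePreserving_fst))).add (hg.integral_prod_left.comp_fst (ν.prod ρ))
  have hf_sec := hf.prodMk_left two_ne_zero ENNReal.ofNat_ne_top
  have hg_sec := hg.prodMk_left two_ne_zero ENNReal.ofNat_ne_top
  have hmean : (fun x => ∫ y, ∫ z, F (x, y, z) ∂ρ ∂ν) =ᵐ[μ]
      fun x => ∫ y, ∫ z, f (x, y, z) ∂ρ ∂ν := by
    filter_upwards [hf_sec, hg_sec] with x hfx hgx
    simp_rw [hF, integral_integral_sub_add_const (hfx.integrable one_le_two)
      (hgx.integrable one_le_two), sub_add_cancel]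
  refine ⟨?_, ?_⟩
  · rw [integral_prod_prod (hFL.integrable one_le_two),
      integral_prod_prod (hf.integrable one_le_two)]
    exact integral_congr_ae hmean
  · rw [variance_prod_prod hFL, variance_congr hmean]
    simp_rw [hF]
    congr 1
    · congr 1
      refine integral_congr_ae ?_
      filter_upwards [hf_sec, hg_sec] with x hfx hgx
      exact variance_integral_sub_add_const hfx hgx _
    · refine integral_congr_ae ?_
      filter_upwards [hf_sec] with x hfx
      exact integral_congr_ae (ae_variance_sub_add_const hfx.1 _)
end

section
/- Let μ be a probability measure on a measurable space α, κ a Markov kernel from α to a measurable space β, f : α × β → ℝ square-integrable with respect to μ ⊗ κ, and g : α × β → ℝ square-integrable with respect to μ ⊗ κ. Define the difference estimator F(a,b) = f(a,b) − g(a,b) + ∫ g(a,b') d(κ a)(b'). Then ∫ F d(μ ⊗ κ) = ∫ f d(μ ⊗ κ), and Var_{μ⊗κ}[F] = Var_{a∼μ}[∫ f(a,b) d(κ a)(b)] + ∫ Var_{b∼κ(a)}[f(a,b) − g(a,b)] dμ(a). -/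
/-!
On each fibre `{a} × β`, `F` differs from `f - g` by the constant `∫ g(a, ·) dκ(a)`, so it has the
fibre variance of `f - g` and the fibre mean of `f`. Both claims then follow from Fubini for
`μ ⊗ₘ κ` and the law of total variance
`Var_{μ ⊗ κ}[F] = Var_μ[∫ F(a, ·) dκ(a)] + ∫ Var_{κ(a)}[F(a, ·)] dμ(a)`.
-/

open MeasureTheory ProbabilityTheory

lemma sq_integral_le_integral_sq {Ω : Type*} [MeasurableSpace Ω] {ν : Measure Ω}
    [IsProbabilityMeasure ν] {X : Ω → ℝ} (hX : MemLp X 2 ν) :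
    (∫ ω, X ω ∂ν) ^ 2 ≤ ∫ ω, X ω ^ 2 ∂ν := by
  have h := variance_nonneg X ν
  rw [variance_eq_sub hX] at h
  simpa using h

lemma integral_sub_add_integral {Ω : Type*} [MeasurableSpace Ω] {ν : Measure Ω}
    [IsProbabilityMeasure ν] {X Y : Ω → ℝ} (hX : Integrable X ν) (hY : Integrable Y ν) :
    ∫ ω, (X ω - Y ω + ∫ ω', Y ω' ∂ν) ∂ν = ∫ ω, X ω ∂ν := by
  have hXY : Integrable (fun ω => X ω - Y ω) ν := hX.sub hY
  rw [integral_add hXY (integrable_const _), integral_sub hX hY]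
  simp

namespace MeasureTheory.MemLp

variable {α β : Type*} [MeasurableSpace α] [MeasurableSpace β] {μ : Measure α} {κ : Kernel α β}
  {f : α × β → ℝ}

lemma ae_memLp_compProd_slice [SFinite μ] [IsSFiniteKernel κ] (hf : MemLp f 2 (μ ⊗ₘ κ)) :
    ∀ᵐ a ∂μ, MemLp (fun b => f (a, b)) 2 (κ a) := by
  have h_sq := ((Measure.integrable_compProd_iff hf.integrable_sq.aestronglyMeasurable).mp
    hf.integrable_sq).1
  filter_upwards [h_sq, hf.aestronglyMeasurable.compProd_mk_left] with a ha_sq ha_meas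
  exact (memLp_two_iff_integrable_sq ha_meas).2 ha_sq

lemma integral_compProd [SFinite μ] [IsMarkovKernel κ] (hf : MemLp f 2 (μ ⊗ₘ κ)) :
    MemLp (fun a => ∫ b, f (a, b) ∂(κ a)) 2 μ := by
  have h_meas : AEStronglyMeasurable (fun a => ∫ b, f (a, b) ∂(κ a)) μ :=
    hf.aestronglyMeasurable.integral_kernel_compProd
  refine (memLp_two_iff_integrable_sq h_meas).2 <|
    hf.integrable_sq.integral_compProd.mono' (h_meas.pow 2) ?_
  filter_upwards [hf.ae_memLp_compProd_slice] with a ha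
  rw [Real.norm_of_nonneg (sq_nonneg _)]
  exact sq_integral_le_integral_sq ha

end MeasureTheory.MemLp

lemma MeasureTheory.Measure.measurePreserving_fst_compProd {α β : Type*} [MeasurableSpace α]
    [MeasurableSpace β] (μ : Measure α) [SFinite μ] (κ : Kernel α β) [IsMarkovKernel κ] :
    MeasurePreserving Prod.fst (μ ⊗ₘ κ) μ :=
  ⟨measurable_fst, Measure.fst_compProd μ κ⟩

section

variable {α β : Type*} [MeasurableSpace α] [MeasurableSpace β] {μ : Measure α} {κ : Kernel α β}

theorem variance_compProd [IsProbabilityMeasure μ] [IsMarkovKernel κ] {F : α × β → ℝ}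
    (hF : MemLp F 2 (μ ⊗ₘ κ)) :
    variance F (μ ⊗ₘ κ) = variance (fun a => ∫ b, F (a, b) ∂(κ a)) μ
      + ∫ a, variance (fun b => F (a, b)) (κ a) ∂μ := by
  set m : α → ℝ := fun a => ∫ b, F (a, b) ∂(κ a)
  set V : α → ℝ := fun a => variance (fun b => F (a, b)) (κ a)
  have hm : MemLp m 2 μ := hF.integral_compProd
  have h_slice_sq : ∀ᵐ a ∂μ, ∫ b, F (a, b) ^ 2 ∂(κ a) = V a + m a ^ 2 := by
    filter_upwards [hF.ae_memLp_compProd_slice] with a ha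
    simp only [V, m, variance_eq_sub ha, Pi.pow_apply]
    ring
  have h_int_sq : Integrable (fun a => ∫ b, F (a, b) ^ 2 ∂(κ a)) μ :=
    hF.integrable_sq.integral_compProd
  have hV : Integrable V μ := by
    refine (h_int_sq.sub hm.integrable_sq).congr ?_
    filter_upwards [h_slice_sq] with a ha
    simp only [Pi.sub_apply, ha]
    ring
  calc variance F (μ ⊗ₘ κ)
      = ∫ p, F p ^ 2 ∂(μ ⊗ₘ κ) - (∫ p, F p ∂(μ ⊗ₘ κ)) ^ 2 := by
        simp [variance_eq_sub hF]
    _ = ∫ a, (V a + m a ^ 2) ∂μ - (∫ a, m a ∂μ) ^ 2 := by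
        rw [Measure.integral_compProd hF.integrable_sq, integral_congr_ae h_slice_sq,
          Measure.integral_compProd (hF.integrable one_le_two)]
    _ = variance m μ + ∫ a, V a ∂μ := by
        rw [integral_add hV hm.integrable_sq, variance_eq_sub hm]
        simp only [Pi.pow_apply]
        ring

end

theorem difference_estimator_compProd
    {α β : Type*} [MeasurableSpace α] [MeasurableSpace β]
    (μ : Measure α) [IsProbabilityMeasure μ]
    (κ : Kernel α β) [IsMarkovKernel κ]
    (f : α × β → ℝ) (hf : MemLp f 2 (μ ⊗ₘ κ))
    (g : α × β → ℝ) (hg : MemLp g 2 (μ ⊗ₘ κ))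
    (F : α × β → ℝ)
    (hF : ∀ a b, F (a, b) = f (a, b) - g (a, b) + ∫ b', g (a, b') ∂(κ a)) :
    (∫ p, F p ∂(μ ⊗ₘ κ)) = (∫ p, f p ∂(μ ⊗ₘ κ))
      ∧ variance F (μ ⊗ₘ κ)
        = variance (fun a => ∫ b, f (a, b) ∂(κ a)) μ
          + ∫ a, variance (fun b => f (a, b) - g (a, b)) (κ a) ∂μ := by
  have hF2 : MemLp F 2 (μ ⊗ₘ κ) := by
    have hG :=
      hg.integral_compProd.comp_measurePreserving (Measure.measurePreserving_fst_compProd μ κ)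
    convert (hf.sub hg).add hG using 1
    exact funext fun p => hF p.1 p.2
  have h_slice_mean : ∀ᵐ a ∂μ, ∫ b, F (a, b) ∂(κ a) = ∫ b, f (a, b) ∂(κ a) := by
    filter_upwards [hf.ae_memLp_compProd_slice, hg.ae_memLp_compProd_slice] with a hfa hga
    simp only [hF]
    exact integral_sub_add_integral (hfa.integrable one_le_two) (hga.integrable one_le_two)
  have h_slice_var : ∀ᵐ a ∂μ, variance (fun b => F (a, b)) (κ a)
      = variance (fun b => f (a, b) - g (a, b)) (κ a) := by
    filter_upwards [(hf.sub hg).ae_memLp_compProd_slice] with a ha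
    simp only [hF]
    exact variance_add_const ha.aestronglyMeasurable _
  refine ⟨?_, ?_⟩
  · rw [Measure.integral_compProd (hF2.integrable one_le_two),
      Measure.integral_compProd (hf.integrable one_le_two)]
    exact integral_congr_ae h_slice_mean
  · rw [variance_compProd hF2, variance_congr h_slice_mean, integral_congr_ae h_slice_var]
end
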